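/- arXiv:math/0005305 — 2 statements merged into one kernel-verified Lean document; each statement's English description precedes it below -/
import Mathlib

section
/- With j as defined in the previous item (under the hypothesis [[ζ, θζ̄], ζ] = −2ζ), the map j is defined over ℝ with respect to the real forms sl(2, ℝ) and g_R (i.e., j(X̄) = j(X)̄), and is equivariant for the Cartan involutions (i.e., j(−Xᵀ) = θ(j(X)) where −Xᵀ is the Cartan involution of sl(2, ℂ) relative to SO(2)). -/
/-! With `w = θ(σ ζ)`, the conjugation `σ` sends `ζ ↦ -w` and `w ↦ -ζ`, while `θ` negates both
`ζ` and `w`. Hence `σ` negates `ζ + w` and `⁅ζ, w⁆`, and the purely imaginary factor `(2i)⁻¹`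
turns these into `σ`-fixed vectors; `θ` negates `ζ + w` but fixes `⁅ζ, w⁆`, which exchanges
`j e` and `-j f`. -/

theorem conj_inv_two_mul_I : starRingEnd ℂ (2 * Complex.I)⁻¹ = -(2 * Complex.I)⁻¹ := by
  simp [Complex.ext_iff]

theorem map_inv_two_mul_I_smul_of_map_eq_neg {M : Type*} [AddCommGroup M] [Module ℂ M]
    {σ : M →+ M} (hσc : ∀ (c : ℂ) (x : M), σ (c • x) = (starRingEnd ℂ c) • σ x) {v : M}
    (hv : σ v = -v) : σ ((2 * Complex.I)⁻¹ • v) = (2 * Complex.I)⁻¹ • v := by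
  rw [hσc, conj_inv_two_mul_I, hv, neg_smul_neg]

theorem map_lie_eq_neg_of_swap {L : Type*} [LieRing L] {σ : L →+ L}
    (hσlie : ∀ x y : L, σ ⁅x, y⁆ = ⁅σ x, σ y⁆) {x y : L} (hx : σ x = -y) (hy : σ y = -x) :
    σ ⁅x, y⁆ = -⁅x, y⁆ := by
  rw [hσlie, hx, hy, neg_lie, lie_neg, neg_neg, ← lie_skew]

theorem LieHom.map_lie_eq_of_map_eq_neg {R L : Type*} [CommRing R] [LieRing L] [LieAlgebra R L]
    {θ : L →ₗ⁅R⁆ L} {x y : L} (hx : θ x = -x) (hy : θ y = -y) : θ ⁅x, y⁆ = ⁅x, y⁆ := by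
  rw [θ.map_lie, hx, hy, neg_lie, lie_neg, neg_neg]

theorem stmt9_general (L : Type*) [LieRing L] [LieAlgebra ℂ L]
    (σ : L →+ L)
    (hσc : ∀ (c : ℂ) (x : L), σ (c • x) = (starRingEnd ℂ c) • σ x)
    (hσlie : ∀ x y : L, σ ⁅x, y⁆ = ⁅σ x, σ y⁆)
    (hσ2 : ∀ x : L, σ (σ x) = x)
    (θ : L →ₗ⁅ℂ⁆ L) (hθ2 : ∀ x : L, θ (θ x) = x)
    (hcomm : ∀ x : L, θ (σ x) = σ (θ x))
    (ζ : L) (hζp : θ ζ = -ζ) :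
    (σ (ζ - θ (σ ζ)) = ζ - θ (σ ζ) ∧
     σ ((2 * Complex.I)⁻¹ • (ζ + θ (σ ζ) + ⁅ζ, θ (σ ζ)⁆))
       = (2 * Complex.I)⁻¹ • (ζ + θ (σ ζ) + ⁅ζ, θ (σ ζ)⁆) ∧
     σ ((2 * Complex.I)⁻¹ • (ζ + θ (σ ζ) - ⁅ζ, θ (σ ζ)⁆))
       = (2 * Complex.I)⁻¹ • (ζ + θ (σ ζ) - ⁅ζ, θ (σ ζ)⁆)) ∧
    (θ (ζ - θ (σ ζ)) = -(ζ - θ (σ ζ)) ∧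
     θ ((2 * Complex.I)⁻¹ • (ζ + θ (σ ζ) + ⁅ζ, θ (σ ζ)⁆))
       = -((2 * Complex.I)⁻¹ • (ζ + θ (σ ζ) - ⁅ζ, θ (σ ζ)⁆)) ∧
     θ ((2 * Complex.I)⁻¹ • (ζ + θ (σ ζ) - ⁅ζ, θ (σ ζ)⁆))
       = -((2 * Complex.I)⁻¹ • (ζ + θ (σ ζ) + ⁅ζ, θ (σ ζ)⁆))) := by
  set w := θ (σ ζ)
  have hσζ : σ ζ = -w := by
    show σ ζ = -θ (σ ζ)
    rw [hcomm, hζp, map_neg, neg_neg]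
  have hσw : σ w = -ζ := by rw [← hcomm, hσ2, hζp]
  have hθw : θ w = -w := by rw [hθ2, hσζ]
  have hσ_lie : σ ⁅ζ, w⁆ = -⁅ζ, w⁆ := map_lie_eq_neg_of_swap hσlie hσζ hσw
  have hθ_lie : θ ⁅ζ, w⁆ = ⁅ζ, w⁆ := θ.map_lie_eq_of_map_eq_neg hζp hθw
  refine ⟨⟨?_, ?_, ?_⟩, ?_, ?_, ?_⟩
  · rw [map_sub, hσζ, hσw, neg_sub_neg]
  · refine map_inv_two_mul_I_smul_of_map_eq_neg hσc ?_
    rw [map_add, map_add, hσζ, hσw, hσ_lie]; abel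
  · refine map_inv_two_mul_I_smul_of_map_eq_neg hσc ?_
    rw [map_sub, map_add, hσζ, hσw, hσ_lie]; abel
  · rw [map_sub, hζp, hθw, neg_sub_neg, neg_sub]
  · rw [map_smul, map_add, map_add, hζp, hθw, hθ_lie]; module
  · rw [map_smul, map_sub, map_add, hζp, hθw, hθ_lie]; module

/-- Let `L` be a complex Lie algebra with a conjugation `σ`
(additive, antilinear, involutive, bracket-preserving — the conjugation of the
real form `g_R`) and a Cartan involution `θ` (a ℂ-linear Lie algebra map of
order two commuting with `σ`).  Let `ζ ∈ L` be nilpotent-critical: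
`θζ = -ζ` (i.e. `ζ ∈ p`), and with `w := θ(σζ) (= θζ̄)` assume
`⁅⁅ζ, w⁆, ζ⁆ = -2ζ` and `⁅⁅ζ, w⁆, w⁆ = 2w`.  Define `j` on the standard basis
by `j(h) = ζ - w`, `j(e) = (ζ + w + ⁅ζ, w⁆)/(2i)`,
`j(f) = (ζ + w - ⁅ζ, w⁆)/(2i)`.  Then `j` is defined over ℝ — `σ` fixes
`j(h), j(e), j(f)` (as `h̄ = h`, `ē = e`, `f̄ = f`) — and `j` is equivariant for
the Cartan involutions: since `-hᵀ = -h`, `-eᵀ = -f`, `-fᵀ = -e`, one has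
`θ(j h) = -j h`, `θ(j e) = -j f`, `θ(j f) = -j e`. -/
theorem stmt9 (L : Type*) [LieRing L] [LieAlgebra ℂ L]
    (σ : L →+ L)
    (hσc : ∀ (c : ℂ) (x : L), σ (c • x) = (starRingEnd ℂ c) • σ x)
    (hσlie : ∀ x y : L, σ ⁅x, y⁆ = ⁅σ x, σ y⁆)
    (hσ2 : ∀ x : L, σ (σ x) = x)
    (θ : L →ₗ⁅ℂ⁆ L) (hθ2 : ∀ x : L, θ (θ x) = x)
    (hcomm : ∀ x : L, θ (σ x) = σ (θ x))
    (ζ : L) (hζp : θ ζ = -ζ)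
    (h1 : ⁅⁅ζ, θ (σ ζ)⁆, ζ⁆ = (-2 : ℂ) • ζ)
    (h2 : ⁅⁅ζ, θ (σ ζ)⁆, θ (σ ζ)⁆ = (2 : ℂ) • (θ (σ ζ))) :
    (σ (ζ - θ (σ ζ)) = ζ - θ (σ ζ) ∧
     σ ((2 * Complex.I)⁻¹ • (ζ + θ (σ ζ) + ⁅ζ, θ (σ ζ)⁆))
       = (2 * Complex.I)⁻¹ • (ζ + θ (σ ζ) + ⁅ζ, θ (σ ζ)⁆) ∧
     σ ((2 * Complex.I)⁻¹ • (ζ + θ (σ ζ) - ⁅ζ, θ (σ ζ)⁆))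
       = (2 * Complex.I)⁻¹ • (ζ + θ (σ ζ) - ⁅ζ, θ (σ ζ)⁆)) ∧
    (θ (ζ - θ (σ ζ)) = -(ζ - θ (σ ζ)) ∧
     θ ((2 * Complex.I)⁻¹ • (ζ + θ (σ ζ) + ⁅ζ, θ (σ ζ)⁆))
       = -((2 * Complex.I)⁻¹ • (ζ + θ (σ ζ) - ⁅ζ, θ (σ ζ)⁆)) ∧
     θ ((2 * Complex.I)⁻¹ • (ζ + θ (σ ζ) - ⁅ζ, θ (σ ζ)⁆))
       = -((2 * Complex.I)⁻¹ • (ζ + θ (σ ζ) + ⁅ζ, θ (σ ζ)⁆))) :=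
  stmt9_general L σ hσc hσlie hσ2 θ hθ2 hcomm ζ hζp
end

section
/- Let ζ ∈ g satisfy the critical point condition [[ζ, θζ̄], ζ] = aζ with a ≠ 0 real, and suppose ζ ∈ p (so θζ = −ζ). Then ζ is K_R-conjugate to −ζ; specifically, Ad(exp(it[ζ, θζ̄]))(ζ) = e^{ita}ζ for t ∈ ℝ, the element exp(it[ζ, θζ̄]) lies in the maximal compact K_R when it[ζ, θζ̄] ∈ k_R, and choosing t = π/a gives Ad(exp(iπa^{-1}[ζ, θζ̄]))(ζ) = −ζ. -/
/-!
`B = ⁅ζ, θζ̄⁆` acts on `ζ` by the scalar `a`, i.e. `B ζ = ζ (B + a)`; exponentiating this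
intertwining relation gives `exp(zB) ζ exp(-zB) = e^{za} ζ`, and `z = iπ/a` turns the factor
into `-1`. The conjugating element lies in `K_R` because `B` is Hermitian (so `itB` is
skew-Hermitian) and, as `ζ` is symmetric, also antisymmetric (so `itB` has real entries).
-/

open Matrix Complex

section BanachAlgebra

variable {𝔸 : Type*} [NormedRing 𝔸] [NormedAlgebra ℂ 𝔸] [CompleteSpace 𝔸]

theorem exp_add_smul_one (x : 𝔸) (z : ℂ) :
    NormedSpace.exp (x + z • 1) = Complex.exp z • NormedSpace.exp x := by
  let +nondep : NormedAlgebra ℚ 𝔸 := .restrictScalars ℚ ℂ 𝔸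
  rw [NormedSpace.exp_add_of_commute ((Commute.one_right x).smul_right z),
    ← Algebra.algebraMap_eq_smul_one, ← NormedSpace.algebraMap_exp_comm, ← Complex.exp_eq_exp_ℂ,
    Algebra.algebraMap_eq_smul_one, mul_smul_one]

theorem exp_mul_mul_exp_neg_of_lie_eq_smul {B x : 𝔸} {c : ℂ} (h : ⁅B, x⁆ = c • x) (z : ℂ) :
    NormedSpace.exp (z • B) * x * NormedSpace.exp (-(z • B)) = Complex.exp (z * c) • x := by
  let +nondep : NormedAlgebra ℚ 𝔸 := .restrictScalars ℚ ℂ 𝔸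
  have hsemiconj : SemiconjBy x (z • B + (z * c) • 1) (z • B) := by
    rw [Ring.lie_def, sub_eq_iff_eq_add] at h
    rw [SemiconjBy, mul_add, mul_smul_one, mul_smul_comm, smul_mul_assoc, h, smul_add, smul_smul,
      add_comm]
  rw [← hsemiconj.exp_right, exp_add_smul_one, mul_smul_comm, smul_mul_assoc, mul_assoc,
    ← NormedSpace.exp_add_of_commute (Commute.refl _).neg_right, add_neg_cancel,
    NormedSpace.exp_zero, mul_one]

end BanachAlgebra

theorem isSelfAdjoint_lie_neg_star {R : Type*} [Ring R] [StarRing R] (x : R) :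
    IsSelfAdjoint ⁅x, -star x⁆ := by
  simp only [IsSelfAdjoint, Ring.lie_def, star_sub, star_mul, star_neg, star_star]
  noncomm_ring

namespace Matrix

theorem map_starRingEnd_eq_conjTranspose_transpose {m n : Type*} (A : Matrix m n ℂ) :
    A.map (starRingEnd ℂ) = Aᴴᵀ := by
  ext
  simp

variable {m : Type*} [Fintype m]

theorem transpose_lie_neg_star_of_isSymm {A : Matrix m m ℂ} (hA : A.IsSymm) :
    ⁅A, -star A⁆ᵀ = -⁅A, -star A⁆ := by
  have hstar : (star A)ᵀ = star A := by
    ext i j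
    simp [hA.apply i j]
  simp only [Ring.lie_def, transpose_sub, transpose_mul, transpose_neg, hstar, hA.eq]
  noncomm_ring

variable [DecidableEq m]

theorem exp_mem_unitaryGroup_of_conjTranspose_eq_neg {A : Matrix m m ℂ} (hA : Aᴴ = -A) :
    NormedSpace.exp A ∈ unitaryGroup m ℂ := by
  rw [mem_unitaryGroup_iff, star_eq_conjTranspose, ← exp_conjTranspose, hA,
    ← exp_add_of_commute _ _ (Commute.refl A).neg_right, add_neg_cancel, NormedSpace.exp_zero]

theorem map_starRingEnd_exp_of_conjTranspose_eq_neg_of_transpose_eq_neg {A : Matrix m m ℂ}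
    (hAH : Aᴴ = -A) (hAT : Aᵀ = -A) :
    (NormedSpace.exp A).map (starRingEnd ℂ) = NormedSpace.exp A := by
  rw [map_starRingEnd_eq_conjTranspose_transpose, ← exp_conjTranspose, ← exp_transpose, hAH,
    transpose_neg, hAT, neg_neg]

end Matrix

theorem stmt11_general (n : ℕ) (ζ : Matrix (Fin n) (Fin n) ℂ)
    (hζsym : ζᵀ = ζ) (a : ℝ) (ha : a ≠ 0)
    (hcrit : ⁅⁅ζ, -(star ζ)⁆, ζ⁆ = (a : ℂ) • ζ) :
    (∀ z : ℂ,
      NormedSpace.exp (z • ⁅ζ, -(star ζ)⁆) * ζ *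
          NormedSpace.exp (-(z • ⁅ζ, -(star ζ)⁆))
        = Complex.exp (z * a) • ζ) ∧
    (∀ t : ℝ,
      NormedSpace.exp ((Complex.I * t) • ⁅ζ, -(star ζ)⁆) ∈
          Matrix.unitaryGroup (Fin n) ℂ ∧
      (NormedSpace.exp ((Complex.I * t) • ⁅ζ, -(star ζ)⁆)).map (starRingEnd ℂ)
        = NormedSpace.exp ((Complex.I * t) • ⁅ζ, -(star ζ)⁆)) ∧
    NormedSpace.exp (((Real.pi * Complex.I) / a) • ⁅ζ, -(star ζ)⁆) * ζ *
        NormedSpace.exp (-(((Real.pi * Complex.I) / a) • ⁅ζ, -(star ζ)⁆))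
      = -ζ := by
  have hconj (z : ℂ) : NormedSpace.exp (z • ⁅ζ, -(star ζ)⁆) * ζ *
      NormedSpace.exp (-(z • ⁅ζ, -(star ζ)⁆)) = Complex.exp (z * a) • ζ :=
    -- the operator norm makes matrices a Banach algebra without changing the topology, so `exp`
    -- is the same
    open scoped Norms.Operator in exp_mul_mul_exp_neg_of_lie_eq_smul hcrit z
  have hB : ⁅ζ, -(star ζ)⁆ᴴ = ⁅ζ, -(star ζ)⁆ := isSelfAdjoint_lie_neg_star ζ
  have hBT : ⁅ζ, -(star ζ)⁆ᵀ = -⁅ζ, -(star ζ)⁆ := transpose_lie_neg_star_of_isSymm hζsym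
  refine ⟨hconj, fun t => ?_, ?_⟩
  · have hH : ((I * t) • ⁅ζ, -(star ζ)⁆)ᴴ = -((I * t) • ⁅ζ, -(star ζ)⁆) := by
      rw [conjTranspose_smul, hB, ← neg_smul]
      simp
    have hT : ((I * t) • ⁅ζ, -(star ζ)⁆)ᵀ = -((I * t) • ⁅ζ, -(star ζ)⁆) := by
      rw [transpose_smul, hBT, smul_neg]
    exact ⟨exp_mem_unitaryGroup_of_conjTranspose_eq_neg hH,
      map_starRingEnd_exp_of_conjTranspose_eq_neg_of_transpose_eq_neg hH hT⟩
  · rw [hconj, div_mul_cancel₀ _ (ofReal_ne_zero.mpr ha), exp_pi_mul_I, neg_one_smul]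

/-- Matrix model (`θζ̄ = -star ζ`): let `ζ ∈ p` (symmetric:
`ζᵀ = ζ`) satisfy the critical eigenvector condition
`⁅⁅ζ, θζ̄⁆, ζ⁆ = aζ` with `a ∈ ℝ`, `a ≠ 0`.  Then:
(1) `Ad(exp(z·⁅ζ, θζ̄⁆))ζ = e^{za} ζ` for all `z ∈ ℂ`;
(2) for real `t`, the element `exp(it·⁅ζ, θζ̄⁆)` lies in the maximal compact
`K_R` — it is unitary and has real entries;
(3) choosing `z = iπ/a` gives `Ad(exp(iπa⁻¹·⁅ζ, θζ̄⁆))ζ = -ζ`, so `ζ` is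
`K_R`-conjugate to `-ζ`. -/
theorem stmt11 (n : ℕ) (ζ : Matrix (Fin n) (Fin n) ℂ) (hζ : ζ ≠ 0)
    (hζsym : ζᵀ = ζ) (a : ℝ) (ha : a ≠ 0)
    (hcrit : ⁅⁅ζ, -(star ζ)⁆, ζ⁆ = (a : ℂ) • ζ) :
    (∀ z : ℂ,
      NormedSpace.exp (z • ⁅ζ, -(star ζ)⁆) * ζ *
          NormedSpace.exp (-(z • ⁅ζ, -(star ζ)⁆))
        = Complex.exp (z * a) • ζ) ∧
    (∀ t : ℝ,
      NormedSpace.exp ((Complex.I * t) • ⁅ζ, -(star ζ)⁆) ∈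
          Matrix.unitaryGroup (Fin n) ℂ ∧
      (NormedSpace.exp ((Complex.I * t) • ⁅ζ, -(star ζ)⁆)).map (starRingEnd ℂ)
        = NormedSpace.exp ((Complex.I * t) • ⁅ζ, -(star ζ)⁆)) ∧
    NormedSpace.exp (((Real.pi * Complex.I) / a) • ⁅ζ, -(star ζ)⁆) * ζ *
        NormedSpace.exp (-(((Real.pi * Complex.I) / a) • ⁅ζ, -(star ζ)⁆))
      = -ζ :=
  stmt11_general n ζ hζsym a ha hcrit
end
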